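/- Suppose G is the graph of conv(V), H the graph of conv(π_d(V)), and assume: h(H) ≥ η, |W| ≥ 0.9|V| where W = π_d(V), and every fiber of π_d restricted to V has size less than n. Then h(G) ≥ η/n. -/

import Mathlib

open Finset

def lin {m : ℕ} (a : Fin m → ℝ) (x : Fin m → Bool) : ℝ :=
  ∑ i, a i * (if x i then 1 else 0)

def IsPolytopeEdge {m : ℕ} (V : Set (Fin m → Bool)) (u v : Fin m → Bool) : Prop :=
  u ∈ V ∧ v ∈ V ∧ ∃ (a : Fin m → ℝ) (b : ℝ),
    lin a u = b ∧ lin a v = b ∧ ∀ w ∈ V, w ≠ u → w ≠ v → lin a w < b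

noncomputable def edgeBd {m : ℕ} (V A : Set (Fin m → Bool)) : ℕ :=
  Set.ncard {q : (Fin m → Bool) × (Fin m → Bool) |
    q.1 ∈ A ∧ q.2 ∉ A ∧ IsPolytopeEdge V q.1 q.2}

def proj (n d : ℕ) (x : Fin n → Bool) : Fin (n - d) → Bool :=
  fun i => x (Fin.castLE (Nat.sub_le n d) i)

/-!
Every edge of `conv (π V)` from `u ∈ π A` to `v ∉ π A` lifts to an edge of `conv V` leaving `A`:
the preimage of the edge is an exposed face of `conv V`, a vertex `p` over `u` of that face is
joined inside it to a vertex differing from `p` in a coordinate where `u` and `v` differ (hence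
lying over `v`), and edges of a face are edges of the polytope. So
`|∂_G A| ≥ |∂_H (π A)| ≥ η · min (|π A|, |W \ π A|)`, and both of these sizes are at least
`|A| / n`: the first by the fiber bound, the second because `|W \ π A| ≥ 0.9 |V| - |A| ≥ 0.8 |A|`.
-/

open Function

lemma Set.ncard_le_mul_ncard_image {α β : Type*} {f : α → β} {V A : Set α} (hV : V.Finite)
    (hA : A ⊆ V) {k : ℕ} (hk : ∀ b, {x ∈ V | f x = b}.ncard ≤ k) :
    A.ncard ≤ k * (f '' A).ncard := by
  classical
  obtain ⟨s, rfl⟩ := (hV.subset hA).exists_finset_coe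
  rw [Set.ncard_coe_finset, ← Finset.coe_image, Set.ncard_coe_finset]
  refine Finset.card_le_mul_card_image s k fun b _ => ?_
  rw [← Set.ncard_coe_finset, Finset.coe_filter]
  refine (Set.ncard_le_ncard ?_ (hV.subset (Set.sep_subset _ _))).trans (hk b)
  exact fun x hx => ⟨hA hx.1, hx.2⟩

section

variable {m : ℕ}

lemma lin_add (a c : Fin m → ℝ) (x : Fin m → Bool) : lin (a + c) x = lin a x + lin c x := by
  simp only [lin, Pi.add_apply, add_mul, sum_add_distrib]

lemma lin_smul (t : ℝ) (a : Fin m → ℝ) (x : Fin m → Bool) : lin (t • a) x = t * lin a x := by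
  simp only [lin, Pi.smul_apply, smul_eq_mul, mul_assoc, mul_sum]

lemma lin_single (i : Fin m) (t : ℝ) (x : Fin m → Bool) :
    lin (Pi.single i t) x = t * if x i then 1 else 0 := by
  rw [lin, Fintype.sum_eq_single i fun j hj => by simp [hj], Pi.single_eq_same]

lemma lin_extend_zero {k : ℕ} {e : Fin k → Fin m} (he : Injective e) (a : Fin k → ℝ)
    (x : Fin m → Bool) : lin (extend e a 0) x = lin a (x ∘ e) :=
  (Fintype.sum_of_injective e he _ _
    (fun j hj => by rw [extend_apply' _ _ _ fun ⟨i, hi⟩ => hj ⟨i, hi⟩]; simp)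
    (fun i => by rw [he.extend_apply]; rfl)).symm

lemma lin_two_pow_injective : Injective (lin fun j : Fin m => (2 : ℝ) ^ (j : ℕ)) := by
  have hsum (x : Fin m → Bool) : lin (fun j : Fin m => (2 : ℝ) ^ (j : ℕ)) x =
      ((∑ j ∈ ({j | x j} : Finset (Fin m)).map Fin.valEmbedding, 2 ^ j : ℕ) : ℝ) := by
    simp [lin, sum_filter]
  intro x y h
  rw [hsum, hsum, Nat.cast_inj] at h
  have := map_injective _ (geomSum_injective le_rfl h)
  funext j
  simpa using congr(j ∈ $this)

lemma exists_lin_injective_lt_of_ne (p : Fin m → Bool) :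
    ∃ c : Fin m → ℝ, Injective (lin c) ∧ ∀ w ≠ p, lin c w < lin c p := by
  set c : Fin m → ℝ := fun j => if p j then 2 ^ (j : ℕ) else -2 ^ (j : ℕ)
  -- `lin c w` is, up to a constant, the binary number whose digits record where `w` agrees with `p`
  have hc (w : Fin m → Bool) : lin c w = lin (fun j : Fin m => (2 : ℝ) ^ (j : ℕ))
      (fun j => w j == p j) - lin (fun j : Fin m => (2 : ℝ) ^ (j : ℕ)) (fun j => !p j) := by
    simp only [lin, ← sum_sub_distrib]
    refine sum_congr rfl fun j _ => ?_
    by_cases hw : w j <;> by_cases hp : p j <;> simp [c, hw, hp]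
  have hinj : Injective (lin c) := fun w w' h => by
    rw [hc, hc, sub_left_inj] at h
    funext j
    have := congrFun (lin_two_pow_injective h) j
    cases hw : w j <;> cases hw' : w' j <;> cases p j <;> simp_all
  refine ⟨c, hinj, fun w hw => (sum_le_sum fun j _ => ?_).lt_of_ne (hinj.ne hw)⟩
  cases w j <;> cases hp : p j <;> simp [c, hp]

lemma IsPolytopeEdge.symm {V : Set (Fin m → Bool)} {u v : Fin m → Bool}
    (h : IsPolytopeEdge V u v) : IsPolytopeEdge V v u := by
  obtain ⟨hu, hv, a, b, hau, hav, hlt⟩ := h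
  exact ⟨hv, hu, a, b, hav, hau, fun w hw hwv hwu => hlt w hw hwu hwv⟩

lemma exists_isPolytopeEdge_apply_ne {F : Set (Fin m → Bool)} {p : Fin m → Bool} (hp : p ∈ F)
    {i : Fin m} (h : ∃ w ∈ F, w i ≠ p i) : ∃ q ∈ F, q i ≠ p i ∧ IsPolytopeEdge F p q := by
  obtain ⟨c, hinj, hcp⟩ := exists_lin_injective_lt_of_ne p
  obtain ⟨q, ⟨hqF, hqi⟩, hqmax⟩ :=
    Set.exists_max_image {w ∈ F | w i ≠ p i} (lin c) (Set.toFinite _) h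
  set χ : (Fin m → Bool) → ℝ := fun w => if w i then 1 else 0
  have hχ : χ q - χ p ≠ 0 := by
    simp only [χ]; cases hq : q i <;> cases hp : p i <;> simp_all
  -- Tilt `c` along `x i` until `q` ties with `p`: on either side of `x i = p i` this is a constant
  -- shift, so `p` stays the strict maximum on its side and `q` on the other.
  set τ := (lin c p - lin c q) / (χ q - χ p)
  have ha (w : Fin m → Bool) : lin (c + Pi.single i τ) w = lin c w + τ * χ w := by
    rw [lin_add, lin_single]
  have hpq : lin (c + Pi.single i τ) q = lin (c + Pi.single i τ) p := by
    have : τ * (χ q - χ p) = lin c p - lin c q := div_mul_cancel₀ _ hχ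
    rw [ha, ha]
    linarith
  refine ⟨q, hqF, hqi, hp, hqF, c + Pi.single i τ, _, rfl, hpq, fun w hwF hwp hwq => ?_⟩
  by_cases hwi : w i = p i
  · have : χ w = χ p := by simp only [χ, hwi]
    rw [ha, ha, this]
    linarith [hcp w hwp]
  · have : χ w = χ q := by
      simp only [χ, (Bool.eq_not_iff.2 hwi).trans (Bool.eq_not_iff.2 hqi).symm]
    have hlt : lin c w < lin c q := (hqmax w ⟨hwF, hwi⟩).lt_of_ne (hinj.ne hwq)
    rw [← hpq, ha, ha, this]
    linarith

lemma IsPolytopeEdge.of_face {V : Set (Fin m → Bool)} {a : Fin m → ℝ} {b : ℝ}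
    (hle : ∀ w ∈ V, lin a w ≤ b) {p q : Fin m → Bool}
    (h : IsPolytopeEdge {w ∈ V | lin a w = b} p q) : IsPolytopeEdge V p q := by
  obtain ⟨⟨hpV, hap⟩, ⟨hqV, haq⟩, c, e, hcp, hcq, hlt⟩ := h
  obtain ⟨M, hM⟩ : ∃ M : ℝ, ∀ w, lin a w < b → lin c w - e < M * (b - lin a w) := by
    refine (Filter.eventually_all.2 fun w => ?_).exists (f := Filter.atTop)
    by_cases hw : lin a w < b
    · exact ((Filter.tendsto_id.atTop_mul_const (sub_pos.2 hw)).eventually_gt_atTop _).mono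
        fun M hM _ => hM
    · exact .of_forall fun M h => absurd h hw
  refine ⟨hpV, hqV, c + M • a, e + M * b, ?_, ?_, fun w hwV hwp hwq => ?_⟩
  · rw [lin_add, lin_smul, hcp, hap]
  · rw [lin_add, lin_smul, hcq, haq]
  rw [lin_add, lin_smul]
  rcases (hle w hwV).lt_or_eq with haw | haw
  · linarith [hM w haw]
  · rw [haw]
    linarith [hlt w ⟨hwV, haw⟩ hwp hwq]

lemma IsPolytopeEdge.exists_lift {k : ℕ} {e : Fin k → Fin m} (he : Injective e)
    {V : Set (Fin m → Bool)} {u v : Fin k → Bool} (h : IsPolytopeEdge ((· ∘ e) '' V) u v)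
    (huv : u ≠ v) {p : Fin m → Bool} (hp : p ∈ V) (hpu : p ∘ e = u) :
    ∃ q ∈ V, q ∘ e = v ∧ IsPolytopeEdge V p q := by
  obtain ⟨-, ⟨q₀, hq₀, rfl⟩, a, b, hau, hav, hlt⟩ := h
  subst hpu
  have hle (w) (hw : w ∈ V) : lin (extend e a 0) w ≤ b := by
    rw [lin_extend_zero he]
    by_cases hwp : w ∘ e = p ∘ e
    · rw [hwp, hau]
    by_cases hwq : w ∘ e = q₀ ∘ e
    · rw [hwq, hav]
    exact (hlt _ ⟨w, hw, rfl⟩ hwp hwq).le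
  have hface (w) (hw : w ∈ V) (hwb : lin (extend e a 0) w = b) :
      w ∘ e = p ∘ e ∨ w ∘ e = q₀ ∘ e := by
    by_contra! hne
    rw [lin_extend_zero he] at hwb
    exact (hlt _ ⟨w, hw, rfl⟩ hne.1 hne.2).ne hwb
  obtain ⟨i, hi⟩ := ne_iff.1 huv
  obtain ⟨q, ⟨hqV, hqb⟩, hqi, hpq⟩ := exists_isPolytopeEdge_apply_ne (i := e i)
    (F := {w ∈ V | lin (extend e a 0) w = b}) ⟨hp, by rw [lin_extend_zero he, hau]⟩
    ⟨q₀, ⟨hq₀, by rw [lin_extend_zero he, hav]⟩, Ne.symm hi⟩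
  exact ⟨q, hqV, (hface q hqV hqb).resolve_left fun h => hqi (congrFun h i), hpq.of_face hle⟩

lemma edgeBd_diff (W B : Set (Fin m → Bool)) : edgeBd W (W \ B) = edgeBd W B := by
  have : {q : (Fin m → Bool) × (Fin m → Bool) |
      q.1 ∈ W \ B ∧ q.2 ∉ W \ B ∧ IsPolytopeEdge W q.1 q.2} =
      Prod.swap '' {q | q.1 ∈ B ∧ q.2 ∉ B ∧ IsPolytopeEdge W q.1 q.2} := by
    rw [Set.image_swap_eq_preimage_swap]
    ext ⟨x, y⟩
    simp only [Set.mem_ofPred_eq, Set.mem_preimage, Prod.swap_prod_mk, Set.mem_sdiff]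
    exact ⟨fun ⟨⟨_, hx⟩, hy, hxy⟩ => ⟨not_not.1 fun h => hy ⟨hxy.2.1, h⟩, hx, hxy.symm⟩,
      fun ⟨hy, hx, hyx⟩ => ⟨⟨hyx.2.1, hx⟩, fun h => h.2 hy, hyx.symm⟩⟩
  rw [edgeBd, edgeBd, this, Set.ncard_image_of_injective _ Prod.swap_injective]

lemma edgeBd_image_comp_le {k : ℕ} {e : Fin k → Fin m} (he : Injective e)
    {V A : Set (Fin m → Bool)} (hA : A ⊆ V) :
    edgeBd ((· ∘ e) '' V) ((· ∘ e) '' A) ≤ edgeBd V A := by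
  refine (Set.ncard_le_ncard ?_ (Set.toFinite _)).trans
    (Set.ncard_image_le (f := Prod.map (· ∘ e) (· ∘ e)) (Set.toFinite _))
  rintro ⟨-, v⟩ ⟨⟨p, hpA, rfl⟩, hv, hpv⟩
  obtain ⟨q, -, rfl, hpq⟩ := hpv.exists_lift he (fun h => hv (h ▸ ⟨p, hpA, rfl⟩)) (hA hpA) rfl
  exact ⟨(p, q), ⟨hpA, fun hq => hv ⟨q, hq, rfl⟩, hpq⟩, rfl⟩

def IsEdgeExpander (W : Set (Fin m → Bool)) (η : ℝ) : Prop :=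
  ∀ B ⊆ W, B.Nonempty → 2 * B.ncard ≤ W.ncard → η * B.ncard ≤ edgeBd W B

lemma IsEdgeExpander.mul_min_ncard_le_edgeBd {W : Set (Fin m → Bool)} {η : ℝ}
    (hexp : IsEdgeExpander W η) (hη : 0 ≤ η) {B : Set (Fin m → Bool)} (hB : B ⊆ W) :
    η * (min B.ncard (W \ B).ncard : ℕ) ≤ edgeBd W B := by
  have key (C) (hC : C ⊆ W) (hCW : 2 * C.ncard ≤ W.ncard) : η * C.ncard ≤ edgeBd W C := by
    rcases C.eq_empty_or_nonempty with rfl | hne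
    · simp
    · exact hexp C hC hne hCW
  have hsum := Set.ncard_sdiff_add_ncard_of_subset hB
  rcases le_total (2 * B.ncard) W.ncard with h | h
  · calc η * (min B.ncard (W \ B).ncard : ℕ) ≤ η * B.ncard := by gcongr; exact min_le_left ..
      _ ≤ edgeBd W B := key B hB h
  · calc η * (min B.ncard (W \ B).ncard : ℕ) ≤ η * (W \ B).ncard := by
          gcongr; exact min_le_right ..
      _ ≤ edgeBd W (W \ B) := key _ Set.sdiff_subset (by omega)
      _ = edgeBd W B := by rw [edgeBd_diff]

end

lemma ncard_le_mul_min_ncard_image {α β : Type*} [Finite α] {f : α → β} {V A : Set α} {k : ℕ}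
    (hk : 2 ≤ k) (hfiber : ∀ b, {x ∈ V | f x = b}.ncard < k)
    (hW : (0.9 : ℝ) * V.ncard ≤ (f '' V).ncard)
    (hAV : A ⊆ V) (hA : 2 * A.ncard ≤ V.ncard) :
    (A.ncard : ℝ) ≤ k * (min (f '' A).ncard (f '' V \ f '' A).ncard : ℕ) := by
  have hAB : A.ncard ≤ (k - 1) * (f '' A).ncard :=
    Set.ncard_le_mul_ncard_image (Set.toFinite V) hAV fun b => Nat.le_sub_one_of_lt (hfiber b)
  have hBA : ((f '' A).ncard : ℝ) ≤ A.ncard := by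
    exact_mod_cast Set.ncard_image_le (Set.toFinite A)
  have hWB : ((f '' V \ f '' A).ncard : ℝ) + (f '' A).ncard = (f '' V).ncard := by
    exact_mod_cast Set.ncard_sdiff_add_ncard_of_subset (Set.image_mono hAV) (Set.toFinite _)
  have hA' : 2 * (A.ncard : ℝ) ≤ V.ncard := by exact_mod_cast hA
  have hk' : (2 : ℝ) * (f '' V \ f '' A).ncard ≤ k * (f '' V \ f '' A).ncard := by
    gcongr; exact_mod_cast hk
  rw [Nat.cast_min, mul_min_of_nonneg _ _ k.cast_nonneg]
  refine le_min ?_ (by linarith)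
  exact_mod_cast hAB.trans (Nat.mul_le_mul_right _ (Nat.sub_le k 1))

theorem stmt_12_general (n d : ℕ) (V : Set (Fin n → Bool)) (η : ℝ)
    (hH : ∀ B ⊆ proj n d '' V, B.Nonempty → 2 * B.ncard ≤ (proj n d '' V).ncard →
      η * B.ncard ≤ (edgeBd (proj n d '' V) B : ℝ))
    (hW : (0.9 : ℝ) * V.ncard ≤ ((proj n d '' V).ncard : ℝ))
    (hfiber : ∀ w : Fin (n - d) → Bool, ({x ∈ V | proj n d x = w}).ncard < n) :
    ∀ A ⊆ V, A.Nonempty → 2 * A.ncard ≤ V.ncard →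
      (η / n) * A.ncard ≤ (edgeBd V A : ℝ) := by
  intro A hAV ⟨x, hx⟩ hA
  rcases lt_or_ge η 0 with hη | hη
  · exact (mul_nonpos_of_nonpos_of_nonneg (div_nonpos_of_nonpos_of_nonneg hη.le n.cast_nonneg)
      A.ncard.cast_nonneg).trans (Nat.cast_nonneg _)
  have hn : 2 ≤ n := by
    have hfib : {y ∈ V | proj n d y = proj n d x}.Nonempty := ⟨x, hAV hx, rfl⟩
    linarith [(Set.ncard_pos (Set.toFinite _)).2 hfib, hfiber (proj n d x)]
  set k := (min (proj n d '' A).ncard (proj n d '' V \ proj n d '' A).ncard : ℕ)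
  calc (η / n) * A.ncard ≤ (η / n) * (n * k) := by
        gcongr; exact ncard_le_mul_min_ncard_image hn hfiber hW hAV hA
    _ = η * k := by field_simp
    _ ≤ edgeBd (proj n d '' V) (proj n d '' A) :=
      IsEdgeExpander.mul_min_ncard_le_edgeBd hH hη (Set.image_mono hAV)
    _ ≤ edgeBd V A := by exact_mod_cast edgeBd_image_comp_le (Fin.castLE_injective _) hAV

/-- If the graph `H` of `conv(π_d(V))` has edge-expansion at least `η`, if
`|π_d(V)| ≥ 0.9 |V|`, and if every fiber of `π_d` over `V` has size less than `n`,
then the graph `G` of `conv(V)` has edge-expansion at least `η / n`. -/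
theorem stmt_12 (n d : ℕ) (hn : 1 ≤ n) (V : Set (Fin n → Bool)) (η : ℝ)
    (hH : ∀ B ⊆ proj n d '' V, B.Nonempty → 2 * B.ncard ≤ (proj n d '' V).ncard →
      η * B.ncard ≤ (edgeBd (proj n d '' V) B : ℝ))
    (hW : (0.9 : ℝ) * V.ncard ≤ ((proj n d '' V).ncard : ℝ))
    (hfiber : ∀ w : Fin (n - d) → Bool, ({x ∈ V | proj n d x = w}).ncard < n) :
    ∀ A ⊆ V, A.Nonempty → 2 * A.ncard ≤ V.ncard →
      (η / n) * A.ncard ≤ (edgeBd V A : ℝ) :=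
  stmt_12_general n d V η hH hW hfiber
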